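/- Let R be a 3-row graph with s columns and R_C eulerian, and let f be the vertex 3-coloring with f(v_{ij}) = i. Then f extends to an amiable coloring of R if and only if R has a parity-coloring. -/

import Mathlib

/-! A 3-row graph with `s` columns is a simple graph on `Fin 3 × Fin s`
(vertex `(i, j)` lies in row `i` and column `j`) whose columns are independent. -/

/-- Every column is an independent set. -/
def ColIndep {s : ℕ} (R : SimpleGraph (Fin 3 × Fin s)) : Prop :=
  ∀ i i' j, ¬ R.Adj (i, j) (i', j)

/-- `d_c(v, R)`: the number of edges of color `c` (under the edge coloring `g`)
incident with `v`. -/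
noncomputable def dColor {s : ℕ} (R : SimpleGraph (Fin 3 × Fin s))
    (g : Sym2 (Fin 3 × Fin s) → Fin 3) (c : Fin 3) (v : Fin 3 × Fin s) : ℕ :=
  {w | R.Adj v w ∧ g s(v, w) = c}.ncard

/-- An amiable coloring of a 3-row graph: a vertex 3-coloring `f` and an edge
3-coloring `g` such that (i) `f` is injective on every column, (ii) no edge has
the color of one of its endpoints, (iii) for every color `c` and column `j`,
`d_c(v₀ⱼ) + d_c(v₁ⱼ) + d_c(v₂ⱼ)` is even. -/
def Amiable {s : ℕ} (R : SimpleGraph (Fin 3 × Fin s))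
    (f : Fin 3 × Fin s → Fin 3) (g : Sym2 (Fin 3 × Fin s) → Fin 3) : Prop :=
  (∀ j, Function.Injective (fun i : Fin 3 => f (i, j))) ∧
  (∀ v w, R.Adj v w → f v ≠ g s(v, w)) ∧
  (∀ c : Fin 3, ∀ j,
    Even (dColor R g c (0, j) + dColor R g c (1, j) + dColor R g c (2, j)))

/-- `R_C` (the multigraph obtained by identifying each column to one vertex) is
eulerian: the degree of each column, i.e. the sum of the degrees of its three
vertices (columns being independent), is even. -/
def EulerianRC {s : ℕ} (R : SimpleGraph (Fin 3 × Fin s)) : Prop :=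
  ∀ j, Even ((R.neighborSet (0, j)).ncard + (R.neighborSet (1, j)).ncard +
    (R.neighborSet (2, j)).ncard)

/-- The `i`-th row. -/
def rowSet (s : ℕ) (i : Fin 3) : Set (Fin 3 × Fin s) := {v | v.1 = i}

/-- `d(v, R[V_a ∪ V_b])`: the degree of `v` in the subgraph induced by rows `a`, `b`. -/
noncomputable def dRows {s : ℕ} (R : SimpleGraph (Fin 3 × Fin s)) (a b : Fin 3)
    (v : Fin 3 × Fin s) : ℕ :=
  {w | R.Adj v w ∧ (w.1 = a ∨ w.1 = b)}.ncard

/-- `|N(v) ∩ V_a|`: the number of neighbours of `v` in row `a`. -/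
noncomputable def nRow {s : ℕ} (R : SimpleGraph (Fin 3 × Fin s)) (a : Fin 3)
    (v : Fin 3 × Fin s) : ℕ :=
  {w | R.Adj v w ∧ w.1 = a}.ncard

/-- A symmetric parity-coloring: a black/white coloring `φ` (`true` = black) with
(i) `φ(v₀ⱼ) = φ(v₁ⱼ)` iff `d(v₀ⱼ, R[V₁ ∪ V₂]) ≡ |N(v₁ⱼ) ∩ V₁| (mod 2)`,
(ii) `φ(v₁ⱼ) = φ(v₂ⱼ)` iff `d(v₁ⱼ, R[V₂ ∪ V₃]) ≡ |N(v₂ⱼ) ∩ V₂| (mod 2)`,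
(iii) every component of every row has an even number of black vertices.
(Here rows are indexed `0,1,2` instead of the paper's `1,2,3`.) -/
def SymParity {s : ℕ} (R : SimpleGraph (Fin 3 × Fin s))
    (φ : Fin 3 × Fin s → Bool) : Prop :=
  (∀ j, (φ (0, j) = φ (1, j)) ↔ Even (dRows R 0 1 (0, j) + nRow R 0 (1, j))) ∧
  (∀ j, (φ (1, j) = φ (2, j)) ↔ Even (dRows R 1 2 (1, j) + nRow R 1 (2, j))) ∧
  (∀ i : Fin 3, ∀ K : (R.induce (rowSet s i)).ConnectedComponent,
    Even ({u : rowSet s i | u ∈ K.supp ∧ φ u.val = true}.ncard))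

/-- A parity-coloring: like a symmetric parity-coloring, except that condition
(ii) compares the parities of `d(v₁ⱼ, R[V₂ ∪ V₃])` and `d(v₂ⱼ, R[V₂ ∪ V₃])`. -/
def ParityColoring {s : ℕ} (R : SimpleGraph (Fin 3 × Fin s))
    (φ : Fin 3 × Fin s → Bool) : Prop :=
  (∀ j, (φ (0, j) = φ (1, j)) ↔ Even (dRows R 0 1 (0, j) + nRow R 0 (1, j))) ∧
  (∀ j, (φ (1, j) = φ (2, j)) ↔ Even (dRows R 1 2 (1, j) + dRows R 1 2 (2, j))) ∧
  (∀ i : Fin 3, ∀ K : (R.induce (rowSet s i)).ConnectedComponent,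
    Even ({u : rowSet s i | u ∈ K.supp ∧ φ u.val = true}.ncard))

/-!
With `f (i, j) = i`, an amiable edge colouring is forced on every edge between two rows (it gets
the third colour), while an edge inside row `i` takes one of the two colours different from `i`.
Colour a vertex black when it has an odd number of same-row edges of one fixed colour. The column
conditions for colours 2 and 0 then become conditions (i) and (ii) of a parity-coloring, and the
one for colour 1 follows from `R_C` being eulerian. Condition (iii) is the handshake lemma inside
each component of a row. Conversely, a vertex set meeting every component of a graph in an even
number of vertices is the odd-degree set of a subgraph (symmetric differences of paths), and
colouring such subgraphs of the rows recovers an amiable colouring.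
-/
open scoped symmDiff

namespace Set

variable {α : Type*} {s t : Set α}

theorem ncard_symmDiff_add_two_mul_ncard_inter (hs : s.Finite) (ht : t.Finite) :
    (s ∆ t).ncard + 2 * (s ∩ t).ncard = s.ncard + t.ncard := by
  have hdisj : Disjoint (s \ t) (t \ s) := disjoint_sdiff_sdiff
  rw [Set.symmDiff_def, ncard_union_eq hdisj hs.sdiff ht.sdiff]
  have h1 := ncard_inter_add_ncard_sdiff_eq_ncard s t hs
  have h2 := ncard_inter_add_ncard_sdiff_eq_ncard t s ht
  rw [inter_comm t s] at h2
  omega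

theorem even_ncard_symmDiff_iff (hs : s.Finite) (ht : t.Finite) :
    Even (s ∆ t).ncard ↔ (Even s.ncard ↔ Even t.ncard) := by
  have := ncard_symmDiff_add_two_mul_ncard_inter hs ht
  simp only [Nat.even_iff]
  omega

theorem ncard_setOf_or [Finite α] {p q : α → Prop} (h : ∀ a, p a → ¬ q a) :
    {a | p a ∨ q a}.ncard = {a | p a}.ncard + {a | q a}.ncard :=
  ncard_union_eq (disjoint_left.2 h)

end Set

namespace SimpleGraph

variable {V : Type*}

def oddDegreeSet (H : SimpleGraph V) : Set V := {v | Odd (H.neighborSet v).ncard}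

@[simp]
theorem oddDegreeSet_bot : (⊥ : SimpleGraph V).oddDegreeSet = ∅ := by
  simp [oddDegreeSet]

theorem oddDegreeSet_edge (u w : V) : (edge u w).oddDegreeSet = {u} ∆ {w} := by
  obtain rfl | huw := eq_or_ne u w
  · simp
  ext x
  simp only [oddDegreeSet, Set.mem_ofPred_eq, Set.mem_symmDiff, Set.mem_singleton_iff]
  by_cases hxu : x = u
  · subst hxu
    have : (edge x w).neighborSet x = {w} := by ext y; simp [edge_adj]; grind
    simp [this, huw]
  by_cases hxw : x = w
  · subst hxw
    have : (edge u x).neighborSet x = {u} := by ext y; simp [edge_adj]; grind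
    simp [this, hxu]
  · have : (edge u w).neighborSet x = ∅ := by ext y; simp [edge_adj]; grind
    simp [this, hxu, hxw]

theorem oddDegreeSet_map {W : Type*} (f : V ↪ W) (H : SimpleGraph V) :
    (H.map f).oddDegreeSet = f '' H.oddDegreeSet := by
  ext w
  by_cases hw : w ∈ Set.range f
  · obtain ⟨v, rfl⟩ := hw
    simp [oddDegreeSet, Set.ncard_image_of_injective _ f.injective]
  · have : (H.map f).neighborSet w = ∅ := by
      ext x; simp only [mem_neighborSet, map_adj]; grind
    simp only [oddDegreeSet, Set.mem_ofPred_eq, this, Set.ncard_empty, Set.mem_image]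
    exact iff_of_false (by decide) fun ⟨v, _, hv⟩ => hw ⟨v, hv⟩

theorem map_induce_eq {H : SimpleGraph V} {S : Set V} (hS : ∀ v w, H.Adj v w → v ∈ S) :
    (H.induce S).map (Function.Embedding.subtype _) = H := by
  ext v w
  simp only [map_adj, comap_adj, Function.Embedding.subtype_apply, Subtype.exists]
  exact ⟨by grind, fun h => ⟨v, hS v w h, w, hS w v h.symm, h, rfl, rfl⟩⟩

variable [Finite V]

theorem oddDegreeSet_symmDiff (H₁ H₂ : SimpleGraph V) :
    (H₁ ∆ H₂).oddDegreeSet = H₁.oddDegreeSet ∆ H₂.oddDegreeSet := by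
  ext v
  have hnbr : (H₁ ∆ H₂).neighborSet v = H₁.neighborSet v ∆ H₂.neighborSet v := rfl
  have := Set.even_ncard_symmDiff_iff (H₁.neighborSet v).toFinite (H₂.neighborSet v).toFinite
  simp only [oddDegreeSet, Set.mem_ofPred_eq, Set.mem_symmDiff, hnbr, ← Nat.not_even_iff_odd]
  tauto

theorem even_ncard_oddDegreeSet (H : SimpleGraph V) : Even H.oddDegreeSet.ncard := by
  classical
  have := Fintype.ofFinite V
  convert H.even_card_odd_degree_vertices using 1
  rw [← Set.ncard_coe_finset]
  congr 1
  ext v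
  simp [oddDegreeSet, ← card_neighborSet_eq_degree, Set.ncard_eq_toFinset_card']

theorem even_ncard_oddDegreeSet_inter {H : SimpleGraph V} {S : Set V}
    (hS : ∀ v w, H.Adj v w → v ∈ S → w ∈ S) : Even (H.oddDegreeSet ∩ S).ncard := by
  let H' : SimpleGraph V :=
    { Adj v w := H.Adj v w ∧ v ∈ S
      symm := ⟨fun v w h => ⟨h.1.symm, hS v w h.1 h.2⟩⟩
      loopless := ⟨fun v h => H.loopless.irrefl v h.1⟩ }
  convert H'.even_ncard_oddDegreeSet using 2
  ext v
  by_cases hv : v ∈ S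
  · have : H'.neighborSet v = H.neighborSet v := by ext w; simp [H', hv]
    simp [oddDegreeSet, this, hv]
  · have : H'.neighborSet v = ∅ := by ext w; simp [H', hv]
    simp [oddDegreeSet, this, hv]

variable {G : SimpleGraph V}

theorem even_ncard_oddDegreeSet_inter_supp {H : SimpleGraph V} (hH : H ≤ G)
    (K : G.ConnectedComponent) : Even (H.oddDegreeSet ∩ K.supp).ncard :=
  even_ncard_oddDegreeSet_inter fun _ _ h => (K.mem_supp_congr_adj (hH h)).1

theorem Reachable.exists_le_oddDegreeSet_eq {u v : V} (h : G.Reachable u v) :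
    ∃ H ≤ G, H.oddDegreeSet = {u} ∆ {v} := by
  obtain ⟨p⟩ := h
  induction p with
  | nil => exact ⟨⊥, bot_le, by simp⟩
  | cons hadj _ ih =>
    obtain ⟨H, hHG, hH⟩ := ih
    have hedge : edge _ _ ≤ G := (edge_le_iff _).2 (.inr hadj)
    refine ⟨edge _ _ ∆ H, symmDiff_le_sup.trans (sup_le hedge hHG), ?_⟩
    rw [oddDegreeSet_symmDiff, oddDegreeSet_edge, hH, symmDiff_assoc,
      symmDiff_symmDiff_cancel_left]

theorem exists_le_oddDegreeSet_eq_iff (T : Set V) :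
    (∃ H ≤ G, H.oddDegreeSet = T) ↔ ∀ K : G.ConnectedComponent, Even (T ∩ K.supp).ncard := by
  refine ⟨fun ⟨H, hHG, hH⟩ => hH ▸ even_ncard_oddDegreeSet_inter_supp hHG, fun hT => ?_⟩
  induction hn : T.ncard using Nat.strong_induction_on generalizing T with
  | _ n ih =>
  obtain rfl | ⟨u, hu⟩ := T.eq_empty_or_nonempty
  · exact ⟨⊥, bot_le, oddDegreeSet_bot⟩
  have hpos : 0 < (T ∩ (G.connectedComponentMk u).supp).ncard :=
    (Set.ncard_pos (Set.toFinite _)).2 ⟨u, hu, rfl⟩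
  obtain ⟨v, ⟨hvT, hvK⟩, hvu⟩ := Set.exists_ne_of_one_lt_ncard
    (s := T ∩ (G.connectedComponentMk u).supp)
    (by obtain ⟨k, hk⟩ := hT (G.connectedComponentMk u); omega) u
  obtain ⟨P, hPG, hP⟩ := (ConnectedComponent.exact hvK).symm.exists_le_oddDegreeSet_eq
  have hlt : (T ∆ P.oddDegreeSet).ncard < n := by
    rw [← hn, hP]
    refine Set.ncard_lt_ncard ⟨fun x hx => ?_, fun h => ?_⟩
    · by_contra hxT
      simp only [Set.mem_symmDiff, Set.mem_singleton_iff] at hx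
      grind
    · have := h hu
      simp only [Set.mem_symmDiff, Set.mem_singleton_iff] at this
      grind
  obtain ⟨H, hHG, hH⟩ := ih _ hlt (T ∆ P.oddDegreeSet) (fun K => by
    rw [Set.inter_symmDiff_distrib_right, Set.even_ncard_symmDiff_iff (Set.toFinite _)
      (Set.toFinite _)]
    exact iff_of_true (hT K) (even_ncard_oddDegreeSet_inter_supp hPG K)) rfl
  exact ⟨H ∆ P, symmDiff_le_sup.trans (sup_le hHG hPG), by
    rw [oddDegreeSet_symmDiff, hH, symmDiff_symmDiff_cancel_right]⟩

theorem exists_le_oddDegreeSet_eq_iff_induce (S T : Set V) :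
    (∃ H ≤ G, (∀ v w, H.Adj v w → v ∈ S) ∧ H.oddDegreeSet = T) ↔
      T ⊆ S ∧
        ∀ K : (G.induce S).ConnectedComponent, Even (((↑) ⁻¹' T : Set S) ∩ K.supp).ncard := by
  constructor
  · rintro ⟨H, hHG, hHS, rfl⟩
    rw [← map_induce_eq hHS, oddDegreeSet_map, Function.Embedding.coe_subtype,
      Subtype.val_injective.preimage_image]
    refine ⟨by simp, (exists_le_oddDegreeSet_eq_iff _).1 ⟨_, fun v w h => hHG h, rfl⟩⟩
  · rintro ⟨hTS, hT⟩
    obtain ⟨H, hHG, hH⟩ := (exists_le_oddDegreeSet_eq_iff _).2 hT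
    refine ⟨H.map (Function.Embedding.subtype _), (map_le_iff_le_comap _ _ _).2 hHG,
      fun v w h => ?_, ?_⟩
    · obtain ⟨a, b, -, rfl, -⟩ := (map_adj _ _ _ _).1 h
      exact a.2
    · rw [oddDegreeSet_map, hH]
      simpa using hTS

end SimpleGraph

section ThreeRow

variable {s : ℕ}

def IsRowProper (R : SimpleGraph (Fin 3 × Fin s)) (g : Sym2 (Fin 3 × Fin s) → Fin 3) : Prop :=
  ∀ v w, R.Adj v w → v.1 ≠ g s(v, w)

def rowColorGraph (R : SimpleGraph (Fin 3 × Fin s)) (g : Sym2 (Fin 3 × Fin s) → Fin 3)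
    (i c : Fin 3) : SimpleGraph (Fin 3 × Fin s) where
  Adj v w := R.Adj v w ∧ v.1 = i ∧ w.1 = i ∧ g s(v, w) = c
  symm := ⟨fun _ _ ⟨h, hv, hw, hc⟩ => ⟨h.symm, hw, hv, by rwa [Sym2.eq_swap]⟩⟩
  loopless := ⟨fun v h => R.loopless.irrefl v h.1⟩

noncomputable def rowColorDegree (R : SimpleGraph (Fin 3 × Fin s))
    (g : Sym2 (Fin 3 × Fin s) → Fin 3) (c : Fin 3) (v : Fin 3 × Fin s) : ℕ :=
  ((rowColorGraph R g v.1 c).neighborSet v).ncard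

/-- The colour whose same-row degree parity is recorded by `blackParity`; with this choice the
column conditions for colours 2 and 0 are exactly conditions (i) and (ii) of `ParityColoring`. -/
def blackColor : Fin 3 → Fin 3
  | 1 => 2
  | _ => 1

noncomputable def blackParity (R : SimpleGraph (Fin 3 × Fin s))
    (g : Sym2 (Fin 3 × Fin s) → Fin 3) (v : Fin 3 × Fin s) : Bool :=
  decide (Odd (rowColorDegree R g (blackColor v.1) v))

variable {R : SimpleGraph (Fin 3 × Fin s)} {g : Sym2 (Fin 3 × Fin s) → Fin 3}

theorem IsRowProper.ne_snd (hg : IsRowProper R g) {v w : Fin 3 × Fin s} (h : R.Adj v w) :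
    w.1 ≠ g s(v, w) := by
  rw [Sym2.eq_swap]
  exact hg w v h.symm

theorem dRows_eq_add {a b : Fin 3} (hab : a ≠ b) (v : Fin 3 × Fin s) :
    dRows R a b v = nRow R a v + nRow R b v := by
  simp only [dRows, nRow, and_or_left]
  exact Set.ncard_setOf_or fun w h h' => hab (h.2.symm.trans h'.2)

theorem sum_dColor (v : Fin 3 × Fin s) :
    dColor R g 0 v + dColor R g 1 v + dColor R g 2 v = (R.neighborSet v).ncard := by
  have : R.neighborSet v = {w | ((R.Adj v w ∧ g s(v, w) = 0) ∨ (R.Adj v w ∧ g s(v, w) = 1)) ∨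
      (R.Adj v w ∧ g s(v, w) = 2)} := by
    ext w; simp only [SimpleGraph.mem_neighborSet, Set.mem_ofPred_eq]; grind
  rw [this, Set.ncard_setOf_or (by grind), Set.ncard_setOf_or (by grind)]
  rfl

theorem IsRowProper.dColor_self_eq_zero (hg : IsRowProper R g) (v : Fin 3 × Fin s) :
    dColor R g v.1 v = 0 := by
  rw [dColor, Set.ncard_eq_zero]
  exact Set.eq_empty_of_forall_notMem fun w ⟨h, hc⟩ => hg v w h hc.symm

theorem IsRowProper.dColor_eq_nRow_add (hg : IsRowProper R g) {i b c : Fin 3} (j : Fin s)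
    (hb : i ≠ b) (hc : i ≠ c) (hbc : b ≠ c) :
    dColor R g c (i, j) = nRow R b (i, j) + rowColorDegree R g c (i, j) := by
  have : {w | R.Adj (i, j) w ∧ g s((i, j), w) = c} =
      {w | (R.Adj (i, j) w ∧ w.1 = b) ∨ (rowColorGraph R g i c).Adj (i, j) w} := by
    ext w
    have h1 := hg (i, j) w
    have h2 : R.Adj (i, j) w → w.1 ≠ g s((i, j), w) := hg.ne_snd
    simp only [rowColorGraph, Set.mem_ofPred_eq]
    grind
  rw [dColor, this, Set.ncard_setOf_or (fun w h h' => hb (h'.2.2.1.symm.trans h.2))]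
  rfl

theorem IsRowProper.rowColorDegree_add (hg : IsRowProper R g) {i b c : Fin 3} (j : Fin s)
    (hb : i ≠ b) (hc : i ≠ c) (hbc : b ≠ c) :
    rowColorDegree R g b (i, j) + rowColorDegree R g c (i, j) = nRow R i (i, j) := by
  have : {w | R.Adj (i, j) w ∧ w.1 = i} =
      {w | (rowColorGraph R g i b).Adj (i, j) w ∨ (rowColorGraph R g i c).Adj (i, j) w} := by
    ext w
    have := hg (i, j) w
    simp only [rowColorGraph, Set.mem_ofPred_eq]
    grind
  rw [nRow, this, Set.ncard_setOf_or (fun w h h' => hbc (h.2.2.2.symm.trans h'.2.2.2))]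
  rfl

theorem IsRowProper.even_column_two_iff (hg : IsRowProper R g) (j : Fin s) :
    Even (dColor R g 2 (0, j) + dColor R g 2 (1, j) + dColor R g 2 (2, j)) ↔
      (blackParity R g (0, j) = blackParity R g (1, j) ↔
        Even (dRows R 0 1 (0, j) + nRow R 0 (1, j))) := by
  show _ ↔ (decide (Odd (rowColorDegree R g 1 (0, j))) =
    decide (Odd (rowColorDegree R g 2 (1, j))) ↔ _)
  have h0 := hg.dColor_eq_nRow_add (i := 0) (b := 1) (c := 2) j (by decide) (by decide) (by decide)
  have h1 := hg.dColor_eq_nRow_add (i := 1) (b := 0) (c := 2) j (by decide) (by decide) (by decide)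
  have h2 := hg.dColor_self_eq_zero (2, j)
  have hx := hg.rowColorDegree_add (i := 0) (b := 1) (c := 2) j (by decide) (by decide) (by decide)
  have hd := dRows_eq_add (R := R) (a := 0) (b := 1) (by decide) (0, j)
  simp only [decide_eq_decide, Nat.odd_iff, Nat.even_iff] at *
  omega

theorem IsRowProper.even_column_zero_iff (hg : IsRowProper R g) (j : Fin s) :
    Even (dColor R g 0 (0, j) + dColor R g 0 (1, j) + dColor R g 0 (2, j)) ↔
      (blackParity R g (1, j) = blackParity R g (2, j) ↔
        Even (dRows R 1 2 (1, j) + dRows R 1 2 (2, j))) := by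
  show _ ↔ (decide (Odd (rowColorDegree R g 2 (1, j))) =
    decide (Odd (rowColorDegree R g 1 (2, j))) ↔ _)
  have h0 := hg.dColor_self_eq_zero (0, j)
  have h1 := hg.dColor_eq_nRow_add (i := 1) (b := 2) (c := 0) j (by decide) (by decide) (by decide)
  have h2 := hg.dColor_eq_nRow_add (i := 2) (b := 1) (c := 0) j (by decide) (by decide) (by decide)
  have hx1 := hg.rowColorDegree_add (i := 1) (b := 2) (c := 0) j (by decide) (by decide) (by decide)
  have hx2 := hg.rowColorDegree_add (i := 2) (b := 1) (c := 0) j (by decide) (by decide) (by decide)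
  have hd1 := dRows_eq_add (R := R) (a := 1) (b := 2) (by decide) (1, j)
  have hd2 := dRows_eq_add (R := R) (a := 1) (b := 2) (by decide) (2, j)
  simp only [decide_eq_decide, Nat.odd_iff, Nat.even_iff] at *
  omega

theorem IsRowProper.even_dColor_column_iff (hg : IsRowProper R g) (heul : EulerianRC R) :
    (∀ c j, Even (dColor R g c (0, j) + dColor R g c (1, j) + dColor R g c (2, j))) ↔
      (∀ j, (blackParity R g (0, j) = blackParity R g (1, j)) ↔
        Even (dRows R 0 1 (0, j) + nRow R 0 (1, j))) ∧
      (∀ j, (blackParity R g (1, j) = blackParity R g (2, j)) ↔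
        Even (dRows R 1 2 (1, j) + dRows R 1 2 (2, j))) := by
  refine ⟨fun h => ⟨fun j => (hg.even_column_two_iff j).1 (h 2 j),
    fun j => (hg.even_column_zero_iff j).1 (h 0 j)⟩, fun ⟨h01, h12⟩ c j => ?_⟩
  have h2 := (hg.even_column_two_iff j).2 (h01 j)
  have h0 := (hg.even_column_zero_iff j).2 (h12 j)
  obtain rfl | rfl | rfl : c = 0 ∨ c = 1 ∨ c = 2 := by omega
  · exact h0
  · have := heul j
    have := sum_dColor (R := R) (g := g) (0, j)
    have := sum_dColor (R := R) (g := g) (1, j)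
    have := sum_dColor (R := R) (g := g) (2, j)
    simp only [Nat.even_iff] at *
    omega
  · exact h2

theorem even_ncard_blackParity_supp (R : SimpleGraph (Fin 3 × Fin s))
    (g : Sym2 (Fin 3 × Fin s) → Fin 3) (i : Fin 3)
    (K : (R.induce (rowSet s i)).ConnectedComponent) :
    Even {u : rowSet s i | u ∈ K.supp ∧ blackParity R g u.val = true}.ncard := by
  have := ((SimpleGraph.exists_le_oddDegreeSet_eq_iff_induce (rowSet s i) _).1
    ⟨rowColorGraph R g i (blackColor i), fun _ _ h => h.1, fun _ _ h => h.2.1, rfl⟩).2 K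
  convert this using 2
  ext ⟨v, hv : v.1 = i⟩
  simp [blackParity, rowColorDegree, SimpleGraph.oddDegreeSet, hv, and_comm]

theorem exists_isRowProper_rowColorGraph_eq (H : Fin 3 → SimpleGraph (Fin 3 × Fin s))
    (hHR : ∀ i, H i ≤ R) (hHS : ∀ i v w, (H i).Adj v w → v.1 = i) :
    ∃ g, IsRowProper R g ∧ ∀ i, rowColorGraph R g i (blackColor i) = H i := by
  classical
  -- for distinct `a b : Fin 3`, `-(a + b)` is the third element
  let g : Sym2 (Fin 3 × Fin s) → Fin 3 := Sym2.lift ⟨fun v w =>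
    if v.1 = w.1 then (if (H v.1).Adj v w then blackColor v.1 else -(v.1 + blackColor v.1))
    else -(v.1 + w.1), fun v w => by
      dsimp only
      by_cases h : v.1 = w.1
      · rw [if_pos h, if_pos h.symm, h, (H w.1).adj_comm]
      · rw [if_neg h, if_neg (Ne.symm h), add_comm]⟩
  have hcolors : ∀ i, blackColor i ≠ i ∧ -(i + blackColor i) ≠ i ∧
      -(i + blackColor i) ≠ blackColor i := by decide
  refine ⟨g, fun v w h => ?_, fun i => ?_⟩
  · simp only [g, Sym2.lift_mk]
    have := hcolors v.1
    split_ifs <;> grind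
  · ext v w
    simp only [rowColorGraph, g, Sym2.lift_mk]
    constructor
    · rintro ⟨-, hv, hw, hc⟩
      have := hcolors i
      grind
    · intro h
      have := hHS i v w h
      have := hHS i w v h.symm
      refine ⟨hHR i h, ?_, ?_, ?_⟩ <;> grind

theorem exists_isRowProper_blackParity_eq (φ : Fin 3 × Fin s → Bool)
    (hφ : ∀ i : Fin 3, ∀ K : (R.induce (rowSet s i)).ConnectedComponent,
      Even {u : rowSet s i | u ∈ K.supp ∧ φ u.val = true}.ncard) :
    ∃ g, IsRowProper R g ∧ blackParity R g = φ := by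
  have hH : ∀ i, ∃ H ≤ R, (∀ v w, H.Adj v w → v ∈ rowSet s i) ∧
      H.oddDegreeSet = {v | v.1 = i ∧ φ v = true} := fun i =>
    (SimpleGraph.exists_le_oddDegreeSet_eq_iff_induce _ _).2 ⟨fun v hv => hv.1, fun K => by
      convert hφ i K using 2
      ext ⟨v, hv : v.1 = i⟩
      simp [hv, and_comm]⟩
  choose H hHR hHS hHodd using hH
  obtain ⟨g, hg, hgH⟩ := exists_isRowProper_rowColorGraph_eq H hHR hHS
  refine ⟨g, hg, funext fun v => ?_⟩
  have := Set.ext_iff.1 (hHodd v.1) v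
  rw [blackParity, rowColorDegree, hgH, Bool.eq_iff_iff, decide_eq_true_iff]
  simpa [SimpleGraph.oddDegreeSet] using this

end ThreeRow

theorem stmt13_general {s : ℕ} (R : SimpleGraph (Fin 3 × Fin s))
    (heul : EulerianRC R) :
    (∃ g : Sym2 (Fin 3 × Fin s) → Fin 3, Amiable R (fun v => v.1) g) ↔
      ∃ φ : Fin 3 × Fin s → Bool, ParityColoring R φ := by
  constructor
  · rintro ⟨g, -, hg : IsRowProper R g, hcol⟩
    obtain ⟨h01, h12⟩ := (hg.even_dColor_column_iff heul).1 hcol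
    exact ⟨blackParity R g, h01, h12, even_ncard_blackParity_supp R g⟩
  · rintro ⟨φ, h01, h12, hcomp⟩
    obtain ⟨g, hg, rfl⟩ := exists_isRowProper_blackParity_eq φ hcomp
    exact ⟨g, fun _ _ _ h => h, hg, (hg.even_dColor_column_iff heul).2 ⟨h01, h12⟩⟩

/-- With `R_C` eulerian, the row coloring `f (i, j) = i` extends to an amiable
coloring of `R` if and only if `R` has a parity-coloring. -/
theorem stmt13 {s : ℕ} (R : SimpleGraph (Fin 3 × Fin s))
    (hcol : ColIndep R) (heul : EulerianRC R) :
    (∃ g : Sym2 (Fin 3 × Fin s) → Fin 3, Amiable R (fun v => v.1) g) ↔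
      ∃ φ : Fin 3 × Fin s → Bool, ParityColoring R φ :=
  stmt13_general R heul
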